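/- arXiv:2109.14809 — 2 statements merged into one kernel-verified Lean document; each statement's English description precedes it below -/
import Mathlib

section
/- Let n ≥ 2, k ≥ 1, R ∈ (-1,1), and ψ a maximal solution of ψ'(r) = (1/(k(1-r²)))·(ψ(r)²+1)·((n-1)(r-R)·ψ(r) + √(1-r²)) on a subinterval of (-1,1). If there exists r₀ ∈ (R,1) with ψ(r₀) > 0, then there exists r₁ ∈ (r₀,1) such that ψ(r) → +∞ as r ↑ r₁. -/
/-!
For `r > R` the right-hand side is positive wherever `ψ ≥ 0`, so once `ψ(r₀) > 0` with `r₀ > R`,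
`ψ` stays positive and increases strictly; hence it either tends to a finite limit or to `+∞` at
the right end `b` of its interval. For `r ≥ r₀` the equation gives `ψ' ≥ C ψ³ / (1 - r)` with
`C = (n - 1)(r₀ - R) / (2k) > 0`, so `-1/(2ψ²) + C log (1 - r)` is nondecreasing; it would tend to
`-∞` if `b = 1`, hence `b < 1`. A finite limit at `b < 1` would let the local Picard–Lindelöf
solution through `(b, lim ψ)` extend `ψ`, contradicting maximality, so `ψ → +∞` at `r₁ = b`.
-/

open Real Set Filter

/-- Right-hand side of the first-order soliton ODE:
`ψ\x27(r) = (1/(k(1-r²)))·(ψ(r)²+1)·((n-1)(r-R)·ψ(r) + √(1-r²))`. -/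
noncomputable def solitonRHS (n k : ℕ) (R y r : ℝ) : ℝ :=
  (1 / ((k : ℝ) * (1 - r ^ 2))) * (y ^ 2 + 1) *
    (((n : ℝ) - 1) * (r - R) * y + Real.sqrt (1 - r ^ 2))

open Topology Function

theorem MonotoneOn.tendsto_nhdsLT_atTop_of_not_bddAbove {α β : Type*} [LinearOrder α]
    [TopologicalSpace α] [OrderTopology α] [LinearOrder β] {f : α → β} {a b : α}
    (hf : MonotoneOn f (Ioo a b)) (hbdd : ¬ BddAbove (f '' Ioo a b)) :
    Tendsto f (𝓝[<] b) atTop := by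
  refine tendsto_atTop.2 fun M => ?_
  obtain ⟨_, ⟨r, hr, rfl⟩, hM⟩ := not_bddAbove_iff.1 hbdd M
  filter_upwards [Ioo_mem_nhdsLT hr.2] with x hx
  exact hM.le.trans (hf hr ⟨hr.1.trans hx.1, hx.2⟩ hx.1.le)

theorem strictMonoOn_Ico_of_deriv_pos_of_nonneg {f f' : ℝ → ℝ} {a b : ℝ}
    (hf : ∀ x ∈ Ico a b, HasDerivAt f (f' x) x) (hf' : ∀ x ∈ Ico a b, 0 ≤ f x → 0 < f' x)
    (ha : 0 ≤ f a) : StrictMonoOn f (Ico a b) := by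
  have hnonneg : ∀ x ∈ Ico a b, 0 ≤ f x := by
    intro x hx
    have hsub : Icc a x ⊆ Ico a b := Icc_subset_Ico_right hx.2
    have := image_le_of_deriv_right_lt_deriv_boundary' (f := fun y => -f y) (f' := fun y => -f' y)
      (B := 0) (B' := 0)
      (fun y hy => (hf y (hsub hy)).continuousAt.neg.continuousWithinAt)
      (fun y hy => (hf y (hsub (Ico_subset_Icc_self hy))).neg.hasDerivWithinAt)
      (by simpa using ha) continuousOn_const (fun _ _ => hasDerivWithinAt_const _ _ _)
      (fun y hy hy0 => by
        simpa using hf' y (hsub (Ico_subset_Icc_self hy)) (neg_eq_zero.1 hy0).ge)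
      (right_mem_Icc.mpr hx.1)
    simpa using this
  refine strictMonoOn_of_deriv_pos (convex_Ico a b)
    (fun x hx => (hf x hx).continuousAt.continuousWithinAt) fun x hx => ?_
  rw [interior_Ico] at hx
  rw [(hf x (Ioo_subset_Ico_self hx)).deriv]
  exact hf' x (Ioo_subset_Ico_self hx) (hnonneg x (Ioo_subset_Ico_self hx))

theorem not_forall_mul_pow_three_div_sub_le_deriv {f f' : ℝ → ℝ} {a b C : ℝ} (hab : a < b)
    (hC : 0 < C) (hf : ∀ x ∈ Ico a b, HasDerivAt f (f' x) x) (hpos : ∀ x ∈ Ico a b, 0 < f x) :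
    ¬ ∀ x ∈ Ico a b, C * f x ^ 3 / (b - x) ≤ f' x := by
  intro hf'
  -- `g' = f' / f ^ 3 - C / (b - x) ≥ 0`, while `g ≤ C log (b - x) → -∞`
  set g : ℝ → ℝ := fun x => -(2 * f x ^ 2)⁻¹ + C * log (b - x)
  have hg : ∀ x ∈ Ico a b, HasDerivAt g (f' x / f x ^ 3 - C / (b - x)) x := by
    intro x hx
    have hfx := (hpos x hx).ne'
    have hbx : b - x ≠ 0 := (sub_pos.mpr hx.2).ne'
    refine (((((hf x hx).fun_pow 2).const_mul 2).fun_inv (by positivity)).fun_neg.fun_add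
      ((((hasDerivAt_id x).const_sub b).log hbx).const_mul C)).congr_deriv ?_
    simp only [id]
    field_simp
    ring
  have hmono : MonotoneOn g (Ico a b) := by
    refine monotoneOn_of_deriv_nonneg (convex_Ico a b)
      (fun x hx => (hg x hx).continuousAt.continuousWithinAt)
      (fun x hx => (hg x (interior_subset hx)).differentiableAt.differentiableWithinAt)
      fun x hx => ?_
    rw [(hg x (interior_subset hx)).deriv, sub_nonneg, le_div_iff₀ (pow_pos (hpos x _) 3)]
    · have := hf' x (interior_subset hx)
      rwa [mul_div_right_comm] at this
    · exact interior_subset hx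
  have hlog : Tendsto (fun x => C * log (b - x)) (𝓝[<] b) atBot := by
    refine (tendsto_log_nhdsGT_zero.comp ?_).const_mul_atBot hC
    refine tendsto_nhdsWithin_of_tendsto_nhds_of_eventually_within _ ?_ ?_
    · exact ((continuous_const.sub continuous_id).tendsto' b 0 (sub_self b)).mono_left
        nhdsWithin_le_nhds
    · filter_upwards [self_mem_nhdsWithin] with x (hx : x < b) using sub_pos.mpr hx
  obtain ⟨x, hx, hxa⟩ :=
    ((hlog.eventually_lt_atBot (g a)).and (Ioo_mem_nhdsLT hab)).exists
  have hle : g a ≤ g x := hmono (left_mem_Ico.mpr hab) (Ioo_subset_Ico_self hxa) hxa.1.le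
  have : g x ≤ C * log (b - x) := by
    have := hpos x (Ioo_subset_Ico_self hxa)
    simp only [g]
    linarith [inv_pos.mpr (by positivity : (0 : ℝ) < 2 * f x ^ 2)]
  linarith

section ODE

variable {E : Type*} [NormedAddCommGroup E] [NormedSpace ℝ E] [CompleteSpace E]

theorem exists_hasDerivAt_Ioo_of_contDiffAt_uncurry {F : ℝ → E → E} {t₀ : ℝ} {x₀ : E}
    (hF : ContDiffAt ℝ 1 (uncurry F) (t₀, x₀)) :
    ∃ ε > 0, ∃ β : ℝ → E, β t₀ = x₀ ∧ ∀ t ∈ Ioo (t₀ - ε) (t₀ + ε), HasDerivAt β (F t (β t)) t := by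
  -- integrate the autonomous field `(t, x) ↦ (1, F t x)` on `ℝ × E`
  obtain ⟨α, hα₀, ε, hε, hα⟩ :=
    ContDiffAt.exists_forall_mem_closedBall_exists_eq_forall_mem_Ioo_hasDerivAt₀
      (contDiffAt_const (c := (1 : ℝ)).prodMk hF) t₀
  have hfst : ∀ t ∈ Ioo (t₀ - ε) (t₀ + ε), HasDerivAt (fun s => (α s).1) 1 t := fun t ht =>
    (ContinuousLinearMap.fst ℝ ℝ E).hasFDerivAt.comp_hasDerivAt t (hα t ht)
  have htime : EqOn (fun s => (α s).1) id (Ioo (t₀ - ε) (t₀ + ε)) :=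
    isOpen_Ioo.eqOn_of_deriv_eq (convex_Ioo _ _).isPreconnected
      (fun t ht => (hfst t ht).differentiableAt.differentiableWithinAt)
      differentiableOn_id (fun t ht => by simp [(hfst t ht).deriv])
      (show t₀ ∈ Ioo (t₀ - ε) (t₀ + ε) from ⟨by linarith, by linarith⟩) (by simp [hα₀])
  refine ⟨ε, hε, fun s => (α s).2, by simp [hα₀], fun t ht => ?_⟩
  have h := hasFDerivAt_snd.comp_hasDerivAt t (hα t ht)
  simp only [uncurry] at h
  rwa [show (α t).1 = t from htime ht] at h

omit [CompleteSpace E] in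
theorem hasDerivAt_ite_lt_of_tendsto_nhdsLT {F : ℝ → E → E} {ψ β : ℝ → E} {a b : ℝ} (hab : a < b)
    (hF : ContinuousAt (uncurry F) (b, β b))
    (hψ : ∀ t ∈ Ioo a b, HasDerivAt ψ (F t (ψ t)) t) (hlim : Tendsto ψ (𝓝[<] b) (𝓝 (β b)))
    (hβ : HasDerivAt β (F b (β b)) b) :
    HasDerivAt (fun t => if t < b then ψ t else β t) (F b (β b)) b := by
  set φ : ℝ → E := fun t => if t < b then ψ t else β t
  have hφψ : ∀ t ∈ Ioo a b, φ =ᶠ[𝓝 t] ψ := fun t ht => by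
    filter_upwards [Iio_mem_nhds ht.2] with s hs using if_pos hs
  have hleft : HasDerivWithinAt φ (F b (β b)) (Iic b) b := by
    refine hasDerivWithinAt_Iic_of_tendsto_deriv (s := Ioo a b) (fun t ht =>
        ((hψ t ht).congr_of_eventuallyEq (hφψ t ht)).differentiableAt.differentiableWithinAt)
      ?_ (Ioo_mem_nhdsLT hab) ?_
    · have : Tendsto φ (𝓝[Ioo a b] b) (𝓝 (β b)) :=
        (hlim.mono_left (nhdsWithin_mono b Ioo_subset_Iio_self)).congr'
          (eventually_nhdsWithin_of_forall fun t ht => (if_pos ht.2).symm)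
      simpa [ContinuousWithinAt, φ] using this
    · have hF' : Tendsto (fun t => F t (ψ t)) (𝓝[<] b) (𝓝 (F b (β b))) :=
        hF.tendsto.comp ((tendsto_nhdsWithin_of_tendsto_nhds tendsto_id).prodMk_nhds hlim)
      refine hF'.congr' ?_
      filter_upwards [Ioo_mem_nhdsLT hab] with t ht
      rw [(hφψ t ht).deriv_eq, (hψ t ht).deriv]
  have hright : HasDerivWithinAt φ (F b (β b)) (Ici b) b :=
    hβ.hasDerivWithinAt.congr (fun t ht => if_neg (not_lt.mpr ht)) (if_neg (lt_irrefl b))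
  simpa [Iic_union_Ici] using hleft.union hright

theorem exists_extension_of_tendsto_nhdsLT {F : ℝ → E → E} {ψ : ℝ → E} {a b : ℝ} {L : E}
    (hab : a < b) (hF : ContDiffAt ℝ 1 (uncurry F) (b, L))
    (hψ : ∀ t ∈ Ioo a b, HasDerivAt ψ (F t (ψ t)) t) (hlim : Tendsto ψ (𝓝[<] b) (𝓝 L)) :
    ∃ b' > b, ∃ φ : ℝ → E, EqOn φ ψ (Ioo a b) ∧ ∀ t ∈ Ioo a b', HasDerivAt φ (F t (φ t)) t := by
  obtain ⟨ε, hε, β, hβb, hβ⟩ := exists_hasDerivAt_Ioo_of_contDiffAt_uncurry hF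
  subst hβb
  refine ⟨b + ε, by linarith, fun t => if t < b then ψ t else β t, fun t ht => if_pos ht.2,
    fun t ht => ?_⟩
  rcases lt_trichotomy t b with htb | rfl | hbt
  · have h : (fun t => if t < b then ψ t else β t) =ᶠ[𝓝 t] ψ := by
      filter_upwards [Iio_mem_nhds htb] with s hs using if_pos hs
    dsimp only
    rw [if_pos htb]
    exact (hψ t ⟨ht.1, htb⟩).congr_of_eventuallyEq h
  · dsimp only
    rw [if_neg (lt_irrefl t)]
    exact hasDerivAt_ite_lt_of_tendsto_nhdsLT hab hF.continuousAt hψ hlim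
      (hβ t ⟨by linarith, by linarith⟩)
  · have h : (fun t => if t < b then ψ t else β t) =ᶠ[𝓝 t] β := by
      filter_upwards [Ioi_mem_nhds hbt] with s hs using if_neg (not_lt.mpr hs.le)
    dsimp only
    rw [if_neg (not_lt.mpr hbt.le)]
    exact (hβ t ⟨by linarith, ht.2⟩).congr_of_eventuallyEq h

end ODE

theorem contDiffAt_uncurry_solitonRHS (n : ℕ) {k : ℕ} (hk : 1 ≤ k) (R : ℝ) {r : ℝ} (y : ℝ)
    (hr : r ^ 2 < 1) :
    ContDiffAt ℝ 1 (uncurry fun r y => solitonRHS n k R y r) (r, y) := by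
  have h1 : (1 : ℝ) - r ^ 2 ≠ 0 := by linarith
  have hk0 : (k : ℝ) ≠ 0 := by positivity
  have hsq : ContDiffAt ℝ 1 (fun q : ℝ × ℝ => 1 - q.1 ^ 2) (r, y) :=
    contDiffAt_const.sub (contDiffAt_fst.pow 2)
  refine ((contDiffAt_const.div (contDiffAt_const.mul hsq) (by simp [h1, hk0])).mul
    ((contDiffAt_snd.pow 2).add contDiffAt_const)).mul
    (((contDiffAt_const.mul (contDiffAt_fst.sub contDiffAt_const)).mul contDiffAt_snd).add
      ((contDiffAt_sqrt h1).comp (r, y) hsq))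

theorem solitonRHS_pos {n k : ℕ} (hn : 1 ≤ n) (hk : 1 ≤ k) {R r y : ℝ} (hr : r ∈ Ioo (-1) 1)
    (hRr : R ≤ r) (hy : 0 ≤ y) : 0 < solitonRHS n k R y r := by
  have h1r : 0 < 1 - r ^ 2 := by nlinarith [hr.1, hr.2]
  have hn1 : (0 : ℝ) ≤ n - 1 := by
    rw [sub_nonneg]
    exact_mod_cast hn
  have hk0 : (0 : ℝ) < k := by positivity
  unfold solitonRHS
  have : 0 ≤ ((n : ℝ) - 1) * (r - R) * y := by
    have := sub_nonneg.mpr hRr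
    positivity
  have := sqrt_pos.mpr h1r
  positivity

theorem mul_pow_three_div_le_solitonRHS {n k : ℕ} (hn : 1 ≤ n) (hk : 1 ≤ k) {R r₀ r y : ℝ}
    (hR : R ≤ r₀) (hr : r ∈ Ioo (-1) 1) (hr₀ : r₀ ≤ r) (hy : 0 ≤ y) :
    ((n : ℝ) - 1) * (r₀ - R) / (2 * k) * y ^ 3 / (1 - r) ≤ solitonRHS n k R y r := by
  obtain ⟨hr₁, hr₂⟩ := hr
  have h1r : 0 < 1 - r := by linarith
  have hn1 : (0 : ℝ) ≤ n - 1 := by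
    rw [sub_nonneg]
    exact_mod_cast hn
  have hk0 : (0 : ℝ) < k := by positivity
  have hfactor : (r₀ - R) * (1 + r) / 2 ≤ r - R := by nlinarith
  have hkey : ((n : ℝ) - 1) * ((r₀ - R) * (1 + r) / 2) * y ^ 3 ≤
      (y ^ 2 + 1) * (((n : ℝ) - 1) * (r - R) * y + sqrt (1 - r ^ 2)) := by
    have hA : 0 ≤ ((n : ℝ) - 1) * (r - R) := mul_nonneg hn1 (by linarith)
    calc ((n : ℝ) - 1) * ((r₀ - R) * (1 + r) / 2) * y ^ 3
        ≤ ((n : ℝ) - 1) * (r - R) * y ^ 3 := by gcongr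
      _ ≤ (y ^ 2 + 1) * (((n : ℝ) - 1) * (r - R) * y + sqrt (1 - r ^ 2)) := by
        nlinarith [sqrt_nonneg (1 - r ^ 2), mul_nonneg hA hy, sq_nonneg y,
          mul_nonneg (sqrt_nonneg (1 - r ^ 2)) (sq_nonneg y)]
  calc ((n : ℝ) - 1) * (r₀ - R) / (2 * k) * y ^ 3 / (1 - r)
      = ((n : ℝ) - 1) * ((r₀ - R) * (1 + r) / 2) * y ^ 3 / (k * (1 - r ^ 2)) := by
        have : (1 : ℝ) + r ≠ 0 := by linarith
        rw [show (1 : ℝ) - r ^ 2 = (1 - r) * (1 + r) by ring]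
        field_simp
    _ ≤ (y ^ 2 + 1) * (((n : ℝ) - 1) * (r - R) * y + sqrt (1 - r ^ 2)) / (k * (1 - r ^ 2)) := by
        have : 0 < 1 - r ^ 2 := by nlinarith
        gcongr
    _ = solitonRHS n k R y r := by
        unfold solitonRHS
        ring

theorem stmt_3_general (n k : ℕ) (hn : 2 ≤ n) (hk : 1 ≤ k) (R a b : ℝ)
    (hab : Set.Ioo a b ⊆ Set.Ioo (-1 : ℝ) 1)
    (ψ : ℝ → ℝ) (hψ : ∀ r ∈ Set.Ioo a b, HasDerivAt ψ (solitonRHS n k R (ψ r) r) r)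
    (hmax : ¬ ∃ (b' : ℝ) (φ : ℝ → ℝ), b < b' ∧ b' ≤ 1 ∧ Set.EqOn φ ψ (Set.Ioo a b) ∧
      ∀ r ∈ Set.Ioo a b', HasDerivAt φ (solitonRHS n k R (φ r) r) r)
    (r₀ : ℝ) (hr₀ab : r₀ ∈ Set.Ioo a b) (hr₀R : r₀ ∈ Set.Ioo R 1) (hpos : 0 < ψ r₀) :
    ∃ r₁ ∈ Set.Ioo r₀ (1 : ℝ),
      Filter.Tendsto ψ (nhdsWithin r₁ (Set.Iio r₁)) Filter.atTop := by
  obtain ⟨har₀, hr₀b⟩ := hr₀ab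
  have hn1 : 1 ≤ n := by omega
  have hsub : Ico r₀ b ⊆ Ioo a b := fun r hr => ⟨har₀.trans_le hr.1, hr.2⟩
  have hmono : StrictMonoOn ψ (Ico r₀ b) :=
    strictMonoOn_Ico_of_deriv_pos_of_nonneg (fun r hr => hψ r (hsub hr))
      (fun r hr => solitonRHS_pos hn1 hk (hab (hsub hr)) (hr₀R.1.le.trans hr.1)) hpos.le
  have hψpos : ∀ r ∈ Ico r₀ b, 0 < ψ r := fun r hr =>
    hpos.trans_le (hmono.monotoneOn (left_mem_Ico.2 hr₀b) hr hr.1)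
  have hb : b < 1 := by
    refine ((Ioo_subset_Ioo_iff (har₀.trans hr₀b)).1 hab).2.lt_of_ne ?_
    rintro rfl
    have hC : 0 < ((n : ℝ) - 1) * (r₀ - R) / (2 * k) := by
      have : (2 : ℝ) ≤ n := by exact_mod_cast hn
      exact div_pos (mul_pos (by linarith) (sub_pos.2 hr₀R.1)) (by positivity)
    exact not_forall_mul_pow_three_div_sub_le_deriv hr₀b hC (fun r hr => hψ r (hsub hr)) hψpos
      fun r hr => mul_pow_three_div_le_solitonRHS hn1 hk hr₀R.1.le (hab (hsub hr)) hr.1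
        (hψpos r hr).le
  have hmonoIoo : MonotoneOn ψ (Ioo r₀ b) := hmono.monotoneOn.mono Ioo_subset_Ico_self
  by_cases hbdd : BddAbove (ψ '' Ioo r₀ b)
  · have hlim := hmonoIoo.tendsto_nhdsWithin_Ioo_left (nonempty_Ioo.2 hr₀b) hbdd
    have hb2 : b ^ 2 < 1 := by nlinarith [(hab ⟨har₀, hr₀b⟩).1]
    obtain ⟨b', hbb', φ, hφψ, hφ⟩ := exists_extension_of_tendsto_nhdsLT (har₀.trans hr₀b)
      (contDiffAt_uncurry_solitonRHS n hk R _ hb2) hψ hlim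
    exact (hmax ⟨min b' 1, φ, lt_min hbb' hb, min_le_right _ _, hφψ,
      fun r hr => hφ r ⟨hr.1, hr.2.trans_le (min_le_left _ _)⟩⟩).elim
  · exact ⟨b, ⟨hr₀b, hb⟩, hmonoIoo.tendsto_nhdsLT_atTop_of_not_bddAbove hbdd⟩

theorem stmt_3 (n k : ℕ) (hn : 2 ≤ n) (hk : 1 ≤ k) (R a b : ℝ)
    (hR : R ∈ Set.Ioo (-1 : ℝ) 1) (hab : Set.Ioo a b ⊆ Set.Ioo (-1 : ℝ) 1)
    (ψ : ℝ → ℝ) (hψ : ∀ r ∈ Set.Ioo a b, HasDerivAt ψ (solitonRHS n k R (ψ r) r) r)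
    (hmax : ¬ ∃ (b' : ℝ) (φ : ℝ → ℝ), b < b' ∧ b' ≤ 1 ∧ Set.EqOn φ ψ (Set.Ioo a b) ∧
      ∀ r ∈ Set.Ioo a b', HasDerivAt φ (solitonRHS n k R (φ r) r) r)
    (r₀ : ℝ) (hr₀ab : r₀ ∈ Set.Ioo a b) (hr₀R : r₀ ∈ Set.Ioo R 1) (hpos : 0 < ψ r₀) :
    ∃ r₁ ∈ Set.Ioo r₀ (1 : ℝ),
      Filter.Tendsto ψ (nhdsWithin r₁ (Set.Iio r₁)) Filter.atTop :=
  stmt_3_general n k hn hk R a b hab ψ hψ hmax r₀ hr₀ab hr₀R hpos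
end

section
/- Let n ≥ 2, k ≥ 2 be integers and R ∈ (-1,1). Suppose ψ solves ψ'(r) = (1/(k(1-r²)))·(ψ(r)²+1)·((n-1)(r-R)·ψ(r) + √(1-r²)) on (r₀,R) with r₀ ∈ (-1,R), and 0 < ψ(r) < -√(1-r²)/((n-1)(r-R)) for all r ∈ (r₀,R). Then ψ'(r)/(ψ(r)²+1) < 1/(2√(1-r²)) for all r ∈ (r₀,R), and hence arctan(ψ(r)) < (1/2)arcsin(r) - (1/2)arcsin(r₀) + arctan(ψ(r₀)). -/
/-!
Below the nullcline the numerator `(n-1)(r-R)ψ + √(1-r²)` of the ODE lies strictly between `0` and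
`√(1-r²)`, so `ψ'/(ψ²+1) < 1/(k√(1-r²)) ≤ 1/(2√(1-r²))`. The left side is `(arctan ψ)'` and the right
side is `(arcsin/2)'`, so the inequality integrates to the bound on `arctan ψ`.
-/

open Real Set Filter

theorem sub_lt_sub_of_hasDerivAt_lt {f g f' g' : ℝ → ℝ} {a b : ℝ} (hab : a < b)
    (hf : ContinuousOn f (Icc a b)) (hg : ContinuousOn g (Icc a b))
    (hf' : ∀ x ∈ Ioo a b, HasDerivAt f (f' x) x) (hg' : ∀ x ∈ Ioo a b, HasDerivAt g (g' x) x)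
    (hlt : ∀ x ∈ Ioo a b, f' x < g' x) :
    f b - f a < g b - g a := by
  have hmono : StrictMonoOn (g - f) (Icc a b) := by
    refine strictMonoOn_of_hasDerivWithinAt_pos (convex_Icc a b) (hg.sub hf) (f' := g' - f')
      (fun x hx => ?_) (fun x hx => ?_)
    · rw [interior_Icc] at hx ⊢
      exact ((hg' x hx).sub (hf' x hx)).hasDerivWithinAt
    · rw [interior_Icc] at hx
      exact sub_pos.2 (hlt x hx)
  have := hmono (left_mem_Icc.2 hab.le) (right_mem_Icc.2 hab.le) hab
  simp only [Pi.sub_apply] at this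
  linarith

theorem neg_of_pos_lt_neg_div {s c y : ℝ} (hs : 0 ≤ s) (hy : 0 < y) (h : y < -s / c) : c < 0 := by
  by_contra! hc
  have : -s / c ≤ 0 := div_nonpos_of_nonpos_of_nonneg (neg_nonpos.2 hs) hc
  linarith

theorem solitonRHS_div_eq (n k : ℕ) (R y r : ℝ) :
    solitonRHS n k R y r / (y ^ 2 + 1) =
      (((n : ℝ) - 1) * (r - R) * y + √(1 - r ^ 2)) / (k * (1 - r ^ 2)) := by
  have : y ^ 2 + 1 ≠ 0 := by positivity
  rw [solitonRHS]
  field_simp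

theorem solitonRHS_div_lt_of_lt_nullcline {n k : ℕ} (hk : 2 ≤ k) {R y r : ℝ} (hr : r ^ 2 < 1)
    (hy : 0 < y) (hnull : y < -√(1 - r ^ 2) / (((n : ℝ) - 1) * (r - R))) :
    solitonRHS n k R y r / (y ^ 2 + 1) < 1 / (2 * √(1 - r ^ 2)) := by
  set c := ((n : ℝ) - 1) * (r - R)
  set s := √(1 - r ^ 2)
  have hs : 0 < s := sqrt_pos.2 (by linarith)
  have hc : c < 0 := neg_of_pos_lt_neg_div hs.le hy hnull
  have hnum_pos : 0 < c * y + s := by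
    have := (lt_div_iff_of_neg hc).1 hnull
    linarith
  have hk2 : (2 : ℝ) ≤ k := by exact_mod_cast hk
  have hden : 0 < (k : ℝ) * (1 - r ^ 2) := by nlinarith
  rw [solitonRHS_div_eq]
  calc (c * y + s) / (k * (1 - r ^ 2))
      < s / (k * (1 - r ^ 2)) := by gcongr; nlinarith
    _ = 1 / (k * s) := by rw [mul_comm, ← div_div, sqrt_div_self', div_div, mul_comm]
    _ ≤ 1 / (2 * s) := by gcongr

theorem stmt_8_general (n k : ℕ) (hk : 2 ≤ k) (R r₀ : ℝ)
    (hR : R ∈ Set.Ioo (-1 : ℝ) 1) (hr₀ : r₀ ∈ Set.Ioo (-1 : ℝ) R)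
    (ψ : ℝ → ℝ) (hψ : ∀ r ∈ Set.Ico r₀ R, HasDerivAt ψ (solitonRHS n k R (ψ r) r) r)
    (hbound : ∀ r ∈ Set.Ioo r₀ R,
      0 < ψ r ∧ ψ r < -Real.sqrt (1 - r ^ 2) / (((n : ℝ) - 1) * (r - R))) :
    ∀ r ∈ Set.Ioo r₀ R,
      deriv ψ r / (ψ r ^ 2 + 1) < 1 / (2 * Real.sqrt (1 - r ^ 2)) ∧
      Real.arctan (ψ r) <
        (1 / 2) * Real.arcsin r - (1 / 2) * Real.arcsin r₀ + Real.arctan (ψ r₀) := by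
  have hmem : ∀ x ∈ Ioo r₀ R, x ∈ Ioo (-1) 1 := fun x hx => ⟨hr₀.1.trans hx.1, hx.2.trans hR.2⟩
  have hslope : ∀ x ∈ Ioo r₀ R,
      solitonRHS n k R (ψ x) x / (ψ x ^ 2 + 1) < 1 / (2 * √(1 - x ^ 2)) := fun x hx =>
    solitonRHS_div_lt_of_lt_nullcline hk (sq_lt_one_iff_abs_lt_one x |>.2 (abs_lt.2 (hmem x hx)))
      (hbound x hx).1 (hbound x hx).2
  intro r hr
  have hIcc : Icc r₀ r ⊆ Ico r₀ R := Icc_subset_Ico_right hr.2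
  have hIoo : Ioo r₀ r ⊆ Ioo r₀ R := Ioo_subset_Ioo_right hr.2.le
  refine ⟨(hψ r (Ioo_subset_Ico_self hr)).deriv ▸ hslope r hr, ?_⟩
  have hcompare := sub_lt_sub_of_hasDerivAt_lt hr.1 (g := fun x => arcsin x / 2)
    (fun x hx =>
      (continuous_arctan.continuousAt.comp (hψ x (hIcc hx)).continuousAt).continuousWithinAt)
    (continuous_arcsin.div_const 2).continuousOn
    (fun x hx => (hψ x (Ioo_subset_Ico_self (hIoo hx))).arctan)
    (fun x hx => (hasDerivAt_arcsin (hmem x (hIoo hx)).1.ne' (hmem x (hIoo hx)).2.ne).div_const 2)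
    (fun x hx => by
      rw [one_div_mul_eq_div, add_comm, div_div, mul_comm]
      exact hslope x (hIoo hx))
  simp only [Function.comp_apply] at hcompare
  linarith

theorem stmt_8 (n k : ℕ) (hn : 2 ≤ n) (hk : 2 ≤ k) (R r₀ : ℝ)
    (hR : R ∈ Set.Ioo (-1 : ℝ) 1) (hr₀ : r₀ ∈ Set.Ioo (-1 : ℝ) R)
    (ψ : ℝ → ℝ) (hψ : ∀ r ∈ Set.Ico r₀ R, HasDerivAt ψ (solitonRHS n k R (ψ r) r) r)
    (hbound : ∀ r ∈ Set.Ioo r₀ R,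
      0 < ψ r ∧ ψ r < -Real.sqrt (1 - r ^ 2) / (((n : ℝ) - 1) * (r - R))) :
    ∀ r ∈ Set.Ioo r₀ R,
      deriv ψ r / (ψ r ^ 2 + 1) < 1 / (2 * Real.sqrt (1 - r ^ 2)) ∧
      Real.arctan (ψ r) <
        (1 / 2) * Real.arcsin r - (1 / 2) * Real.arcsin r₀ + Real.arctan (ψ r₀) :=
  stmt_8_general n k hk R r₀ hR hr₀ ψ hψ hbound
end
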